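/- arXiv:1712.01366 — 3 statements merged into one kernel-verified Lean document; each statement's English description precedes it below -/
import Mathlib

section
/- For every compactly supported smooth function u : ℝ³ → ℂ, one has (1/4)∫ |u(x)|²/|x|² dx ≤ ∫ |∇u(x)|² dx (Hardy's inequality in dimension 3). -/
open MeasureTheory Set Metric intervalIntegral
open scoped ENNReal

lemma norm_sq_c (z : ℂ) : ‖z‖^2 = z.re*z.re + z.im*z.im := by
  rw [Complex.sq_norm, Complex.normSq_apply]

lemma hardy1d {g g' : ℝ → ℂ} (hg : ∀ r, HasDerivAt g (g' r) r) (hg' : Continuous g')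
    {R : ℝ} (hR : 0 < R) (hz : g R = 0) :
    ∫ r in (0:ℝ)..R, ‖g r‖^2 ≤ 4 * ∫ r in (0:ℝ)..R, r^2 * ‖g' r‖^2 := by
  have hgc : Continuous g := continuous_iff_continuousAt.2 fun r => (hg r).continuousAt
  have hre : ∀ r, HasDerivAt (fun t => (g t).re) ((g' r).re) r := fun r =>
    (Complex.reCLM.hasFDerivAt.comp_hasDerivAt r (hg r))
  have him : ∀ r, HasDerivAt (fun t => (g t).im) ((g' r).im) r := fun r =>
    (Complex.imCLM.hasFDerivAt.comp_hasDerivAt r (hg r))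
  have hnf : (fun t => ‖g t‖^2) = fun t => (g t).re*(g t).re + (g t).im*(g t).im :=
    funext fun t => norm_sq_c _
  have hh : ∀ r, HasDerivAt (fun t => ‖g t‖^2)
      (((g' r).re*(g r).re + (g r).re*(g' r).re) + ((g' r).im*(g r).im + (g r).im*(g' r).im)) r := by
    intro r
    rw [hnf]
    exact ((hre r).mul (hre r)).add ((him r).mul (him r))
  set h' : ℝ → ℝ := fun r => ((g' r).re*(g r).re + (g r).re*(g' r).re)
      + ((g' r).im*(g r).im + (g r).im*(g' r).im) with hh'def
  have hF : ∀ r, HasDerivAt (fun t => t * ‖g t‖^2) (1 * ‖g r‖^2 + r * h' r) r :=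
    fun r => (hasDerivAt_id r).mul (hh r)
  have hgcont : Continuous fun t => ‖g t‖^2 := (hgc.norm).pow 2
  have hh'cont : Continuous h' := by rw [hh'def]; fun_prop
  have hFint : ∫ r in (0:ℝ)..R, (1 * ‖g r‖^2 + r * h' r) = 0 := by
    rw [intervalIntegral.integral_eq_sub_of_hasDerivAt (fun r _ => hF r)
      ((by fun_prop : Continuous fun r => 1 * ‖g r‖^2 + r * h' r).intervalIntegrable _ _)]
    simp [hz]
  have i1 : IntervalIntegrable (fun r => 1 * ‖g r‖^2) volume 0 R :=
    (by fun_prop : Continuous fun r => 1 * ‖g r‖^2).intervalIntegrable _ _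
  have i2 : IntervalIntegrable (fun r => r * h' r) volume 0 R :=
    (by fun_prop : Continuous fun r => r * h' r).intervalIntegrable _ _
  have i2' : IntervalIntegrable (fun r => -(r * h' r)) volume 0 R :=
    (by fun_prop : Continuous fun r => -(r * h' r)).intervalIntegrable _ _
  have i3 : IntervalIntegrable (fun r => r^2 * ‖g' r‖^2) volume 0 R :=
    (by fun_prop : Continuous fun r => r^2 * ‖g' r‖^2).intervalIntegrable _ _
  have i4 : IntervalIntegrable (fun r => (1:ℝ)/2 * ‖g r‖^2 + 2 * (r^2 * ‖g' r‖^2)) volume 0 R :=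
    (by fun_prop :
      Continuous fun r => (1:ℝ)/2 * ‖g r‖^2 + 2 * (r^2 * ‖g' r‖^2)).intervalIntegrable _ _
  have i5 : IntervalIntegrable (fun r => (1:ℝ)/2 * ‖g r‖^2) volume 0 R :=
    (by fun_prop : Continuous fun r => (1:ℝ)/2 * ‖g r‖^2).intervalIntegrable _ _
  have i6 : IntervalIntegrable (fun r => 2 * (r^2 * ‖g' r‖^2)) volume 0 R :=
    (by fun_prop : Continuous fun r => 2 * (r^2 * ‖g' r‖^2)).intervalIntegrable _ _
  rw [intervalIntegral.integral_add i1 i2] at hFint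
  simp only [one_mul] at hFint
  have heq : ∫ r in (0:ℝ)..R, ‖g r‖^2 = ∫ r in (0:ℝ)..R, -(r * h' r) := by
    rw [intervalIntegral.integral_neg]; linarith
  have hmono : ∫ r in (0:ℝ)..R, -(r * h' r)
      ≤ ∫ r in (0:ℝ)..R, ((1:ℝ)/2 * ‖g r‖^2 + 2 * (r^2 * ‖g' r‖^2)) := by
    apply intervalIntegral.integral_mono_on hR.le i2' i4
    intro r _
    rw [norm_sq_c, norm_sq_c, hh'def]
    nlinarith [sq_nonneg ((g r).re + 2*r*(g' r).re), sq_nonneg ((g r).im + 2*r*(g' r).im)]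
  rw [intervalIntegral.integral_add i5 i6, intervalIntegral.integral_const_mul,
    intervalIntegral.integral_const_mul] at hmono
  linarith [heq ▸ hmono]

noncomputable abbrev E3 := EuclideanSpace ℝ (Fin 3)

lemma hardy_ray (u : E3 → ℂ) (hu : ContDiff ℝ (⊤ : ℕ∞) u) {R : ℝ} (hR : 0 < R)
    (hRs : ∀ x : E3, R ≤ ‖x‖ → u x = 0) (v : E3) (hv : ‖v‖ = 1) :
    ∫⁻ r in Ioi (0:ℝ), ENNReal.ofReal (‖u (r • v)‖^2)
      ≤ 4 * ∫⁻ r in Ioi (0:ℝ), ENNReal.ofReal (r^2 * ‖fderiv ℝ u (r • v)‖^2) := by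
  set g : ℝ → ℂ := fun r => u (r • v) with hgdef
  set g' : ℝ → ℂ := fun r => fderiv ℝ u (r • v) v with hg'def
  have hnorm : ∀ r : ℝ, 0 ≤ r → ‖r • v‖ = r := by
    intro r hr; rw [norm_smul, hv, mul_one, Real.norm_eq_abs, abs_of_nonneg hr]
  have hg : ∀ r, HasDerivAt g (g' r) r := by
    intro r
    have h1 : HasDerivAt (fun t : ℝ => t • v) ((1:ℝ) • v) r := (hasDerivAt_id r).smul_const v
    rw [one_smul] at h1
    exact ((hu.differentiable (by simp) _).hasFDerivAt.comp_hasDerivAt r h1)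
  have hDuc : Continuous fun r : ℝ => fderiv ℝ u (r • v) :=
    (hu.continuous_fderiv (by simp)).comp (by fun_prop)
  have hg'c : Continuous g' := hDuc.clm_apply continuous_const
  have hz : g R = 0 := hRs _ (by rw [hnorm R hR.le])
  have h1d := hardy1d hg hg'c hR hz
  have hbound : ∀ r : ℝ, ‖g' r‖^2 ≤ ‖fderiv ℝ u (r • v)‖^2 := by
    intro r
    have := (fderiv ℝ u (r • v)).le_opNorm v
    rw [hv, mul_one] at this
    exact pow_le_pow_left₀ (norm_nonneg _) this 2
  have i3 : IntervalIntegrable (fun r => r^2 * ‖g' r‖^2) volume 0 R :=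
    (by fun_prop : Continuous fun r => r^2 * ‖g' r‖^2).intervalIntegrable _ _
  have i4 : IntervalIntegrable (fun r => r^2 * ‖fderiv ℝ u (r • v)‖^2) volume 0 R :=
    (by fun_prop : Continuous fun r => r^2 * ‖fderiv ℝ u (r • v)‖^2).intervalIntegrable _ _
  have h1d' : ∫ r in (0:ℝ)..R, ‖g r‖^2 ≤ 4 * ∫ r in (0:ℝ)..R, r^2 * ‖fderiv ℝ u (r • v)‖^2 := by
    refine h1d.trans (by
      have := intervalIntegral.integral_mono_on hR.le i3 i4
        (fun r _ => mul_le_mul_of_nonneg_left (hbound r) (sq_nonneg r))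
      linarith)
  -- convert LHS lintegral to interval integral
  have hsplit : (Ioi (0:ℝ)) = Ioc 0 R ∪ Ioi R := (Ioc_union_Ioi_eq_Ioi hR.le).symm
  have hLHS : ∫⁻ r in Ioi (0:ℝ), ENNReal.ofReal (‖g r‖^2)
      = ENNReal.ofReal (∫ r in (0:ℝ)..R, ‖g r‖^2) := by
    rw [hsplit, lintegral_union measurableSet_Ioi (Ioc_disjoint_Ioi le_rfl)]
    have hz2 : ∫⁻ r in Ioi R, ENNReal.ofReal (‖g r‖^2) = 0 := by
      rw [setLIntegral_congr_fun measurableSet_Ioi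
        (fun r hr => ?_), lintegral_zero]
      have : g r = 0 := hRs _ (by rw [hnorm r (hR.le.trans (le_of_lt hr))]; exact (le_of_lt hr))
      simp [this]
    rw [hz2, add_zero, ← ofReal_integral_eq_lintegral_ofReal, intervalIntegral.integral_of_le hR.le]
    · exact ((continuous_iff_continuousAt.2 fun r => (hg r).continuousAt).norm.pow 2).integrableOn_Ioc 
    · exact Filter.Eventually.of_forall fun r => by positivity
  have hRHS : ENNReal.ofReal (∫ r in (0:ℝ)..R, r^2 * ‖fderiv ℝ u (r • v)‖^2)
      ≤ ∫⁻ r in Ioi (0:ℝ), ENNReal.ofReal (r^2 * ‖fderiv ℝ u (r • v)‖^2) := by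
    rw [intervalIntegral.integral_of_le hR.le,
      ofReal_integral_eq_lintegral_ofReal ((by fun_prop :
        Continuous fun r => r^2 * ‖fderiv ℝ u (r • v)‖^2).integrableOn_Ioc)
      (Filter.Eventually.of_forall fun r => by positivity)]
    exact lintegral_mono_set (Ioc_subset_Ioi_self)
  calc ∫⁻ r in Ioi (0:ℝ), ENNReal.ofReal (‖g r‖^2)
      = ENNReal.ofReal (∫ r in (0:ℝ)..R, ‖g r‖^2) := hLHS
    _ ≤ ENNReal.ofReal (4 * ∫ r in (0:ℝ)..R, r^2 * ‖fderiv ℝ u (r • v)‖^2) :=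
        ENNReal.ofReal_le_ofReal h1d'
    _ = 4 * ENNReal.ofReal (∫ r in (0:ℝ)..R, r^2 * ‖fderiv ℝ u (r • v)‖^2) := by
        rw [ENNReal.ofReal_mul (by norm_num)]; norm_num
    _ ≤ 4 * ∫⁻ r in Ioi (0:ℝ), ENNReal.ofReal (r^2 * ‖fderiv ℝ u (r • v)‖^2) :=
        mul_le_mul_right hRHS 4

lemma polar_lintegral (G : E3 → ℝ≥0∞) (hG : Measurable G) :
    ∫⁻ x, G x = ∫⁻ ω : sphere (0:E3) 1, ∫⁻ r in Ioi (0:ℝ),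
      ENNReal.ofReal (r ^ 2) * G (r • (ω : E3)) ∂volume ∂(volume.toSphere) := by
  have hdim : Module.finrank ℝ E3 = 3 := by simp [E3]
  have h0 : ∫⁻ x, G x = ∫⁻ x : ({(0:E3)}ᶜ : Set E3), G x.1
      ∂((volume : Measure E3).comap Subtype.val) := by
    rw [lintegral_subtype_comap (measurableSet_singleton _).compl,
      ← setLIntegral_univ (μ := (volume : Measure E3)) (f := G)]
    exact (setLIntegral_congr (by simp [measure_singleton])).symm
  have hF : Measurable fun p : sphere (0:E3) 1 × Ioi (0:ℝ) => G ((p.2 : ℝ) • (p.1 : E3)) := by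
    apply hG.comp
    fun_prop
  have h1 := (Measure.measurePreserving_homeomorphUnitSphereProd
    (volume : Measure E3)).lintegral_comp hF
  have h2 : ∀ x : ({(0:E3)}ᶜ : Set E3),
      G (((homeomorphUnitSphereProd E3 x).2 : ℝ) •
        ((homeomorphUnitSphereProd E3 x).1 : E3)) = G x.1 := by
    intro x
    congr 1
    simp only [homeomorphUnitSphereProd_apply_snd_coe, homeomorphUnitSphereProd_apply_fst_coe,
      smul_smul]
    rw [mul_inv_cancel₀ (norm_ne_zero_iff.2 x.2), one_smul]
  simp only [h2] at h1
  rw [h0, h1, lintegral_prod _ hF.aemeasurable]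
  congr 1
  ext ω
  rw [Measure.volumeIoiPow, lintegral_withDensity_eq_lintegral_mul _ (by fun_prop) (by fun_prop)]
  simp only [Pi.mul_apply]
  rw [lintegral_subtype_comap measurableSet_Ioi
    (f := fun r : ℝ => ENNReal.ofReal (r ^ (Module.finrank ℝ E3 - 1)) * G (r • (ω : E3)))]
  simp [hdim]

/-- Hardy's inequality in dimension 3: for every compactly supported smooth
`u : ℝ³ → ℂ`, `(1/4) ∫ |u(x)|²/|x|² dx ≤ ∫ |∇u(x)|² dx`. -/
theorem hardy_inequality_dim3
    (u : EuclideanSpace ℝ (Fin 3) → ℂ)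
    (hu : ContDiff ℝ (⊤ : ℕ∞) u) (hsupp : HasCompactSupport u) :
    (1 / 4) * ∫ x : EuclideanSpace ℝ (Fin 3), ‖u x‖ ^ 2 / ‖x‖ ^ 2 ≤
      ∫ x : EuclideanSpace ℝ (Fin 3), ‖fderiv ℝ u x‖ ^ 2 := by
  set f1 : E3 → ℝ := fun x => ‖u x‖ ^ 2 / ‖x‖ ^ 2 with hf1def
  set f2 : E3 → ℝ := fun x => ‖fderiv ℝ u x‖ ^ 2 with hf2def
  have hf1m : Measurable f1 :=
    ((hu.continuous.norm.pow 2).measurable).div ((continuous_norm.pow 2).measurable)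
  have hf2c : Continuous f2 := (hu.continuous_fderiv (by simp)).norm.pow 2
  have hf2i : Integrable f2 :=
    hf2c.integrable_of_hasCompactSupport (((hsupp.fderiv ℝ)).comp_left (g := fun L => ‖L‖^2)
      (by simp))
  have hf2nn : 0 ≤ f2 := fun x => by positivity
  -- choose R
  obtain ⟨R₀, hR₀⟩ := hsupp.isBounded.subset_closedBall 0
  set R : ℝ := |R₀| + 1 with hRdef
  have hR : 0 < R := by positivity
  have hRs : ∀ x : E3, R ≤ ‖x‖ → u x = 0 := by
    intro x hx
    apply image_eq_zero_of_notMem_tsupport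
    intro hmem
    have h3 := mem_closedBall.mp (hR₀ hmem)
    rw [dist_zero_right] at h3
    have h4 : R ≤ R₀ := hx.trans h3
    rw [hRdef] at h4
    linarith [le_abs_self R₀]
  -- key lintegral inequality
  have hG1 : Measurable fun x : E3 => ENNReal.ofReal (f1 x) :=
    ENNReal.measurable_ofReal.comp hf1m
  have hG2 : Measurable fun x : E3 => ENNReal.ofReal (f2 x) :=
    ENNReal.measurable_ofReal.comp hf2c.measurable
  have key : ∫⁻ x, ENNReal.ofReal (f1 x) ≤ 4 * ∫⁻ x, ENNReal.ofReal (f2 x) := by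
    rw [polar_lintegral _ hG1, polar_lintegral _ hG2,
      ← lintegral_const_mul' 4 _ (by norm_num)]
    apply lintegral_mono
    intro ω
    have hv : ‖(ω : E3)‖ = 1 := mem_sphere_zero_iff_norm.1 ω.2
    have hnorm : ∀ r : ℝ, 0 < r → ‖r • (ω : E3)‖ = r := fun r hr => by
      rw [norm_smul, hv, mul_one, Real.norm_eq_abs, abs_of_pos hr]
    calc ∫⁻ r in Ioi (0:ℝ), ENNReal.ofReal (r ^ 2) * ENNReal.ofReal (f1 (r • (ω : E3)))
        = ∫⁻ r in Ioi (0:ℝ), ENNReal.ofReal (‖u (r • (ω : E3))‖ ^ 2) := by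
          apply setLIntegral_congr_fun measurableSet_Ioi
          intro r hr
          beta_reduce
          rw [← ENNReal.ofReal_mul (by positivity)]
          congr 1
          rw [hf1def]
          simp only
          rw [hnorm r hr]
          have hrne : r ≠ 0 := ne_of_gt hr
          field_simp
      _ ≤ 4 * ∫⁻ r in Ioi (0:ℝ), ENNReal.ofReal (r ^ 2 * ‖fderiv ℝ u (r • (ω : E3))‖ ^ 2) :=
          hardy_ray u hu hR hRs _ hv
      _ = 4 * ∫⁻ r in Ioi (0:ℝ), ENNReal.ofReal (r ^ 2) * ENNReal.ofReal (f2 (r • (ω : E3))) := by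
          congr 1
          apply setLIntegral_congr_fun measurableSet_Ioi
          intro r hr
          beta_reduce
          rw [← ENNReal.ofReal_mul (by positivity)]
  -- conclude
  by_cases h1 : Integrable f1
  · have e1 : ∫ x, f1 x = (∫⁻ x, ENNReal.ofReal (f1 x)).toReal :=
      integral_eq_lintegral_of_nonneg_ae (Filter.Eventually.of_forall fun x => by positivity)
        h1.aestronglyMeasurable
    have e2 : ∫ x, f2 x = (∫⁻ x, ENNReal.ofReal (f2 x)).toReal :=
      integral_eq_lintegral_of_nonneg_ae (Filter.Eventually.of_forall fun x => by positivity)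
        hf2i.aestronglyMeasurable
    have hfin : ∫⁻ x, ENNReal.ofReal (f2 x) ≠ ∞ := by
      have h := hf2i.hasFiniteIntegral
      rw [HasFiniteIntegral] at h
      have hcong : ∀ x, ENNReal.ofReal (f2 x) = (‖f2 x‖₊ : ℝ≥0∞) := fun x =>
        (Real.enorm_eq_ofReal (hf2nn x)).symm
      rw [lintegral_congr hcong]
      exact h.ne
    rw [e1, e2]
    have h4 : (4 : ℝ≥0∞) * ∫⁻ x, ENNReal.ofReal (f2 x) ≠ ∞ :=
      ENNReal.mul_ne_top (by norm_num) hfin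
    have := ENNReal.toReal_mono h4 key
    rw [ENNReal.toReal_mul] at this
    have h44 : ((4:ℝ≥0∞)).toReal = 4 := by norm_num
    rw [h44] at this
    linarith
  · rw [integral_undef h1]
    have : (0:ℝ) ≤ ∫ x, f2 x := integral_nonneg hf2nn
    linarith
end

section
/- For every y ∈ ℝ³ with |y| > 0 and every p < 3/2, ∫_{|x| > 2|y|} |x|^{-6+2p} e^{-|x|/2} dx ≤ C_p · |y|^{-3+2p} · e^{-|y|}. -/
/-!
In polar coordinates the integral becomes `4π ∫_{2|y|}^∞ r^{-4+2p} e^{-r/2} dr`. On that range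
`e^{-r/2} ≤ e^{-|y|}`, and the remaining power integral converges because `-4 + 2p < -1`,
giving `(2|y|)^{-3+2p} / (3 - 2p)`.
-/

open MeasureTheory Set Metric

theorem setIntegral_fun_norm_addHaar_lt_norm {E F : Type*} [NormedAddCommGroup E]
    [NormedSpace ℝ E] [FiniteDimensional ℝ E] [Nontrivial E] [MeasurableSpace E] [BorelSpace E]
    (μ : Measure E) [μ.IsAddHaarMeasure] [NormedAddCommGroup F] [NormedSpace ℝ F] (f : ℝ → F)
    {a : ℝ} (ha : 0 ≤ a) :
    ∫ x in {x : E | a < ‖x‖}, f ‖x‖ ∂μ = Module.finrank ℝ E • μ.real (ball 0 1) •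
      ∫ r in Ioi a, r ^ (Module.finrank ℝ E - 1) • f r := by
  have hS : MeasurableSet {x : E | a < ‖x‖} := measurableSet_lt measurable_const measurable_norm
  rw [← integral_indicator hS]
  change ∫ x, (Ioi a).indicator f ‖x‖ ∂μ = _
  rw [integral_fun_norm_addHaar μ]
  simp_rw [← indicator_smul_apply (Ioi a) (fun r : ℝ => r ^ (Module.finrank ℝ E - 1)) f]
  rw [setIntegral_indicator measurableSet_Ioi, Ioi_inter_Ioi, max_eq_right ha]

theorem setIntegral_Ioi_rpow_mul_le_of_antitone {g : ℝ → ℝ} (hg : Antitone g) (hg0 : 0 ≤ g)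
    {a s : ℝ} (ha : 0 < a) (hs : s < -1) :
    ∫ r in Ioi a, r ^ s * g r ≤ g a * (a ^ (s + 1) / -(s + 1)) := by
  have hint : IntegrableOn (fun r => r ^ s) (Ioi a) := integrableOn_Ioi_rpow_of_lt hs ha
  have hbound : ∀ r ∈ Ioi a, r ^ s * g r ≤ g a * r ^ s := fun r hr => by
    rw [mul_comm]
    exact mul_le_mul_of_nonneg_right (hg (le_of_lt hr)) (Real.rpow_nonneg (ha.trans hr).le _)
  calc ∫ r in Ioi a, r ^ s * g r ≤ ∫ r in Ioi a, g a * r ^ s := by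
        refine setIntegral_mono_on ?_ (hint.const_mul _) measurableSet_Ioi hbound
        refine (hint.const_mul (g a)).mono' ?_ ?_
        · exact ((measurable_id.pow_const s).mul hg.measurable).aestronglyMeasurable
        · filter_upwards [ae_restrict_mem measurableSet_Ioi] with r hr
          rw [Real.norm_of_nonneg (mul_nonneg (Real.rpow_nonneg (ha.trans hr).le _) (hg0 r))]
          exact hbound r hr
    _ = g a * (a ^ (s + 1) / -(s + 1)) := by
        rw [integral_const_mul, integral_Ioi_rpow_of_lt hs ha, neg_div, div_neg]

/-- For `p < 3/2`, `∫_{|x| > 2|y|} |x|^{-6+2p} e^{-|x|/2} dx ≤ C_p |y|^{-3+2p} e^{-|y|}`. -/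
theorem integral_pow_exp_exterior (p : ℝ) (hp : p < 3 / 2) :
    ∃ C : ℝ, 0 < C ∧ ∀ y : EuclideanSpace ℝ (Fin 3), 0 < ‖y‖ →
      ∫ x in {x : EuclideanSpace ℝ (Fin 3) | 2 * ‖y‖ < ‖x‖},
          ‖x‖ ^ (-6 + 2 * p) * Real.exp (-‖x‖ / 2) ≤
        C * ‖y‖ ^ (-3 + 2 * p) * Real.exp (-‖y‖) := by
  set V := volume.real (ball (0 : EuclideanSpace ℝ (Fin 3)) 1)
  have hV : 0 < V :=
    ENNReal.toReal_pos (measure_ball_pos _ _ one_pos).ne' measure_ball_lt_top.ne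
  have hp' : 0 < 3 - 2 * p := by linarith
  refine ⟨3 * V * 2 ^ (-3 + 2 * p) / (3 - 2 * p), by positivity, fun y hy => ?_⟩
  have h2y : 0 < 2 * ‖y‖ := by positivity
  have hexp : Antitone fun r : ℝ => Real.exp (-r / 2) := fun r s hrs =>
    Real.exp_le_exp.2 (by linarith)
  calc ∫ x in {x : EuclideanSpace ℝ (Fin 3) | 2 * ‖y‖ < ‖x‖},
          ‖x‖ ^ (-6 + 2 * p) * Real.exp (-‖x‖ / 2)
      = 3 * V * ∫ r in Ioi (2 * ‖y‖), r ^ (-4 + 2 * p) * Real.exp (-r / 2) := by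
        rw [setIntegral_fun_norm_addHaar_lt_norm volume
            (fun r => r ^ (-6 + 2 * p) * Real.exp (-r / 2)) h2y.le, finrank_euclideanSpace_fin,
          nsmul_eq_mul, smul_eq_mul, Nat.cast_ofNat, mul_assoc]
        congr 2
        refine setIntegral_congr_fun measurableSet_Ioi fun r (hr : 2 * ‖y‖ < r) => ?_
        rw [smul_eq_mul, ← mul_assoc, ← Real.rpow_natCast, ← Real.rpow_add (h2y.trans hr)]
        ring_nf
    _ ≤ 3 * V * (Real.exp (-(2 * ‖y‖) / 2) * ((2 * ‖y‖) ^ (-3 + 2 * p) / (3 - 2 * p))) := by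
        gcongr
        rw [show 3 - 2 * p = -(-4 + 2 * p + 1) by ring, show -3 + 2 * p = -4 + 2 * p + 1 by ring]
        exact setIntegral_Ioi_rpow_mul_le_of_antitone hexp (fun r => (Real.exp_pos _).le) h2y
          (by linarith)
    _ = 3 * V * 2 ^ (-3 + 2 * p) / (3 - 2 * p) * ‖y‖ ^ (-3 + 2 * p) * Real.exp (-‖y‖) := by
        rw [Real.mul_rpow zero_le_two hy.le, show -(2 * ‖y‖) / 2 = -‖y‖ by ring]
        ring
end

section
/- For every y ∈ ℝ³ with y ≠ 0, ∫_C e^{-2|x-y|}/|x-y|² dx ≤ C·min(1, |y|), where C = {x : |y|/2 ≤ |x| ≤ 2|y| and |x-y| ≥ |y|/2}. -/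
open MeasureTheory Metric Module

/-! On the region, `|x - y| ≥ |y|/2`, so the integrand is at most `4 e^{-|y|}/|y|²`, and the region
lies in the ball of radius `2|y|`, of volume `≲ |y|³`. Hence the integral is `≲ |y| e^{-|y|}`, and
`t e^{-t} ≤ min(1, t)`. -/

theorem norm_setIntegral_le_of_subset_closedBall {E F : Type*} [NormedAddCommGroup E]
    [NormedSpace ℝ E] [FiniteDimensional ℝ E] [MeasurableSpace E] [BorelSpace E]
    [NormedAddCommGroup F] [NormedSpace ℝ F] (μ : Measure E) [μ.IsAddHaarMeasure]
    {f : E → F} {s : Set E} {c : E} {R M : ℝ} (hR : 0 ≤ R) (hM : 0 ≤ M)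
    (hs : s ⊆ closedBall c R) (hf : ∀ x ∈ s, ‖f x‖ ≤ M) :
    ‖∫ x in s, f x ∂μ‖ ≤ M * (R ^ finrank ℝ E * μ.real (closedBall 0 1)) := by
  have hμs : μ s < ⊤ := (measure_mono hs).trans_lt measure_closedBall_lt_top
  calc ‖∫ x in s, f x ∂μ‖ ≤ M * μ.real s := norm_setIntegral_le_of_norm_le_const hμs hf
    _ ≤ M * μ.real (closedBall c R) :=
      mul_le_mul_of_nonneg_left (measureReal_mono hs measure_closedBall_lt_top.ne) hM
    _ = M * (R ^ finrank ℝ E * μ.real (closedBall 0 1)) := by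
      rw [Measure.addHaar_real_closedBall' μ c hR]

theorem Real.exp_neg_mul_div_sq_le {c a t : ℝ} (hc : 0 ≤ c) (ha : 0 < a) (hat : a ≤ t) :
    Real.exp (-c * t) / t ^ 2 ≤ Real.exp (-c * a) / a ^ 2 := by
  refine div_le_div₀ (Real.exp_pos _).le (Real.exp_le_exp.2 ?_) (by positivity)
    (pow_le_pow_left₀ ha.le hat 2)
  nlinarith

theorem Real.mul_exp_neg_le_min_one {t : ℝ} (ht : 0 ≤ t) : t * Real.exp (-t) ≤ min 1 t := by
  refine le_min ?_ ?_
  · rw [Real.exp_neg, ← div_eq_mul_inv, div_le_one (Real.exp_pos t)]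
    linarith [Real.add_one_le_exp t]
  · exact mul_le_of_le_one_right ht (Real.exp_le_one_iff.2 (neg_nonpos.2 ht))

/-- For `y ≠ 0`, the integral of `e^{-2|x-y|}/|x-y|²` over the annular region
`{|y|/2 ≤ |x| ≤ 2|y|} ∩ {|x-y| ≥ |y|/2}` is at most `C min(1, |y|)`. -/
theorem integral_yukawa_sq_annulus :
    ∃ C : ℝ, 0 < C ∧ ∀ y : EuclideanSpace ℝ (Fin 3), y ≠ 0 →
      ∫ x in {x : EuclideanSpace ℝ (Fin 3) |
          ‖y‖ / 2 ≤ ‖x‖ ∧ ‖x‖ ≤ 2 * ‖y‖ ∧ ‖y‖ / 2 ≤ ‖x - y‖},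
          Real.exp (-2 * ‖x - y‖) / ‖x - y‖ ^ 2 ≤ C * min 1 ‖y‖ := by
  set B := (volume : Measure (EuclideanSpace ℝ (Fin 3))).real (closedBall 0 1)
  have hB : 0 < B :=
    ENNReal.toReal_pos (measure_closedBall_pos _ _ one_pos).ne' measure_closedBall_lt_top.ne
  refine ⟨32 * B, by positivity, fun y hy => ?_⟩
  set r := ‖y‖
  have hr : 0 < r := norm_pos_iff.2 hy
  set s := {x : EuclideanSpace ℝ (Fin 3) | r / 2 ≤ ‖x‖ ∧ ‖x‖ ≤ 2 * r ∧ r / 2 ≤ ‖x - y‖}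
  have hbound : ∀ x ∈ s,
      ‖Real.exp (-2 * ‖x - y‖) / ‖x - y‖ ^ 2‖ ≤ Real.exp (-2 * (r / 2)) / (r / 2) ^ 2 := by
    rintro x ⟨-, -, hxy⟩
    rw [Real.norm_of_nonneg (by positivity)]
    exact Real.exp_neg_mul_div_sq_le zero_le_two (by positivity) hxy
  calc _ ≤ ‖∫ x in s, Real.exp (-2 * ‖x - y‖) / ‖x - y‖ ^ 2‖ := Real.le_norm_self _
    _ ≤ Real.exp (-2 * (r / 2)) / (r / 2) ^ 2 * ((2 * r) ^ finrank ℝ _ * B) :=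
      norm_setIntegral_le_of_subset_closedBall _ (by positivity) (by positivity)
        (fun x hx => mem_closedBall_zero_iff.2 hx.2.1) hbound
    _ = 32 * B * (r * Real.exp (-r)) := by
      rw [finrank_euclideanSpace_fin]
      field_simp
      ring_nf
    _ ≤ 32 * B * min 1 r := by gcongr; exact Real.mul_exp_neg_le_min_one hr.le
end
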